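/- Let R be a commutative ℝ-algebra, let L : R → R be an ℝ-linear map, let T : R → R be an ℝ-linear derivation (T(ab) = T(a)b + aT(b)), let q ∈ R, and let n be a fixed real number. Assume: (i) for every integer ℓ ≥ 1 and every m ∈ R, L^ℓ(q·m) − q·L^ℓ(m) = 2ℓ·L^{ℓ−1}(2T(m) + (n+4−2ℓ)m); (ii) T∘L = L∘T − 2L. Let k, ℓ ∈ ℕ with ℓ ≥ 1 and set w := −(n−2k−2ℓ)/2. Then for every f ∈ R with T(f) = −2ℓ·f and every m ∈ R with T(m) = (w−2)·m, one has Σ_{r+s=k} (k!/(r!·s!))·((ℓ+s−1)!·(ℓ+r−1)!/((ℓ−1)!)²)·L^{r}(f·L^{s}(q·m)) = q·Σ_{r+s=k} (k!/(r!·s!))·((ℓ+s−1)!·(ℓ+r−1)!/((ℓ−1)!)²)·L^{r}(f·L^{s}m). -/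

import Mathlib

/-!
Write `c s` for the coefficient of the `s`-th summand and `u s := f * L^s m`. The commutator
formula (i), applied once to `q * m` and once to `q * u s`, turns the `s`-th summand of the
difference of the two sides into
`c s • 4s(k+ℓ-s) • L^(k-s) (u (s-1)) - c s • 4(k-s)(ℓ+s) • L^(k-s-1) (u s)`.
The weights fed into (i) come from (ii) and the Leibniz rule, and the choice of `w`
(i.e. `2w + n = 2(k+ℓ)`) is what makes both factors so simple. Since
`c (s+1) / c s = (k-s)(ℓ+s) / ((s+1)(k+ℓ-s-1))`, the sum telescopes to zero.
-/

noncomputable def tangentialCoeff (k ℓ s : ℕ) : ℝ :=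
  ((k.factorial : ℝ) / (((k - s).factorial : ℝ) * (s.factorial : ℝ)))
    * (((ℓ + s - 1).factorial : ℝ) * ((ℓ + (k - s) - 1).factorial : ℝ)
        / ((ℓ - 1).factorial : ℝ) ^ 2)

theorem tangentialCoeff_succ_mul {k ℓ s : ℕ} (hℓ : 1 ≤ ℓ) (hs : s < k) :
    tangentialCoeff k ℓ (s + 1) * ((s + 1) * (k + ℓ - (s + 1)))
      = tangentialCoeff k ℓ s * ((k - s) * (ℓ + s)) := by
  obtain ⟨a, rfl⟩ : ∃ a, k = s + 1 + a := ⟨k - (s + 1), by omega⟩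
  obtain ⟨b, rfl⟩ : ∃ b, ℓ = b + 1 := ⟨ℓ - 1, by omega⟩
  simp only [tangentialCoeff, show s + 1 + a - (s + 1) = a by omega,
    show s + 1 + a - s = a + 1 by omega, show b + 1 + (s + 1) - 1 = b + s + 1 by omega,
    show b + 1 + s - 1 = b + s by omega, show b + 1 + a - 1 = b + a by omega,
    show b + 1 + (a + 1) - 1 = b + a + 1 by omega, Nat.add_sub_cancel, Nat.factorial_succ]
  push_cast
  field_simp
  ring

section
variable {K M : Type*} [CommRing K] [AddCommGroup M] [Module K M]

theorem Module.End.mul_pow_eq_of_mul_eq_sub_smul {T L : Module.End K M} {c : K}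
    (h : T * L = L * T - c • L) (s : ℕ) : T * L ^ s = L ^ s * T - (s * c) • L ^ s := by
  induction s with
  | zero => simp
  | succ s ih =>
    rw [pow_succ, ← mul_assoc, ih, sub_mul, mul_assoc, h, mul_sub, smul_mul_assoc, mul_smul_comm,
      ← mul_assoc, ← pow_succ]
    push_cast
    module

theorem Module.End.apply_pow_apply_eq_smul {T L : Module.End K M} {c a : K}
    (h : T * L = L * T - c • L) {x : M} (hx : T x = a • x) (s : ℕ) :
    T ((L ^ s) x) = (a - s * c) • (L ^ s) x := by
  have := congr($(Module.End.mul_pow_eq_of_mul_eq_sub_smul h s) x)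
  simp only [Module.End.mul_apply, LinearMap.sub_apply, LinearMap.smul_apply, hx, map_smul] at this
  rw [this, sub_smul]
end

theorem Finset.sum_range_succ_add_shift {M : Type*} [AddCommMonoid M] (x y : ℕ → M) (k : ℕ) :
    ∑ s ∈ Finset.range (k + 1), (x s + y s)
      = x 0 + y k + ∑ s ∈ Finset.range k, (x (s + 1) + y s) := by
  rw [Finset.sum_add_distrib, Finset.sum_range_succ', Finset.sum_range_succ y,
    Finset.sum_add_distrib]
  abel

section
variable {K R : Type*} [CommRing K] [CommRing R] [Algebra K R]

theorem apply_mul_eq_smul_of_leibniz {T : R →ₗ[K] R}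
    (hT : ∀ a b : R, T (a * b) = T a * b + a * T b) {a b : R} {c d : K}
    (ha : T a = c • a) (hb : T b = d • b) : T (a * b) = (c + d) • (a * b) := by
  rw [hT, ha, hb, smul_mul_assoc, mul_smul_comm, add_smul]

theorem pow_apply_mul_sub_mul_pow_apply {L T : Module.End K R} {q : R} {n : K}
    (hi : ∀ ℓ : ℕ, 1 ≤ ℓ → ∀ m : R, (L ^ ℓ) (q * m) - q * (L ^ ℓ) m =
      (2 * (ℓ : K)) • (L ^ (ℓ - 1)) ((2 : K) • T m + (n + 4 - 2 * (ℓ : K)) • m))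
    {x : R} {c : K} (hx : T x = c • x) (t : ℕ) :
    (L ^ t) (q * x) - q * (L ^ t) x = (2 * t * (2 * c + n + 4 - 2 * t)) • (L ^ (t - 1)) x := by
  rcases Nat.eq_zero_or_pos t with rfl | ht
  · simp
  · rw [hi t ht, hx, smul_smul, ← add_smul, map_smul, smul_smul]
    ring_nf
end

theorem pow_apply_mul_pow_apply_mul_sub_mul {R : Type*} [CommRing R] [Algebra ℝ R]
    {L T : R →ₗ[ℝ] R} {q : R} {n : ℝ}
    (hT : ∀ a b : R, T (a * b) = T a * b + a * T b)
    (hi : ∀ ℓ : ℕ, 1 ≤ ℓ → ∀ m : R,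
      (L ^ ℓ) (q * m) - q * (L ^ ℓ) m =
        (2 * (ℓ : ℝ)) • (L ^ (ℓ - 1)) ((2 : ℝ) • T m + (n + 4 - 2 * (ℓ : ℝ)) • m))
    (hii : T ∘ₗ L = L ∘ₗ T - (2 : ℝ) • L)
    {k ℓ : ℕ} {w : ℝ} (hw : w = -(n - 2 * (k : ℝ) - 2 * (ℓ : ℝ)) / 2)
    {f m : R} (hf : T f = (-2 * (ℓ : ℝ)) • f) (hm : T m = (w - 2) • m)
    {s : ℕ} (hs : s ≤ k) :
    (L ^ (k - s)) (f * (L ^ s) (q * m)) - q * (L ^ (k - s)) (f * (L ^ s) m)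
      = (4 * s * ((k : ℝ) + ℓ - s)) • (L ^ (k - s)) (f * (L ^ (s - 1)) m)
        - (4 * ((k : ℝ) - s) * (ℓ + s)) • (L ^ (k - s - 1)) (f * (L ^ s) m) := by
  have hLm (j : ℕ) :=
    Module.End.apply_pow_apply_eq_smul (by simpa [Module.End.mul_eq_comp] using hii) hm j
  have hq_m := pow_apply_mul_sub_mul_pow_apply hi hm s
  have hq_fm :=
    pow_apply_mul_sub_mul_pow_apply hi (apply_mul_eq_smul_of_leibniz hT hf (hLm s)) (k - s)
  rw [sub_eq_iff_eq_add'] at hq_m hq_fm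
  rw [hq_m, mul_add, mul_left_comm, mul_smul_comm, map_add, map_smul, hq_fm]
  subst hw
  push_cast [Nat.cast_sub hs]
  module

/-- The algebraic content of Corollary 2.5: the ambient operator
`Σ_{r+s=k} (k!/(r!s!))((ℓ+s-1)!(ℓ+r-1)!/((ℓ-1)!)²) L^r(f · L^s ·)` commutes
with multiplication by `q` on elements of weight `w - 2`. -/
theorem linear_tangential {R : Type*} [CommRing R] [Algebra ℝ R]
    (L T : R →ₗ[ℝ] R) (q : R) (n : ℝ)
    (hT : ∀ a b : R, T (a * b) = T a * b + a * T b)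
    (hi : ∀ ℓ : ℕ, 1 ≤ ℓ → ∀ m : R,
      (L ^ ℓ) (q * m) - q * (L ^ ℓ) m =
        (2 * (ℓ : ℝ)) • (L ^ (ℓ - 1)) ((2 : ℝ) • T m + (n + 4 - 2 * (ℓ : ℝ)) • m))
    (hii : T ∘ₗ L = L ∘ₗ T - (2 : ℝ) • L)
    (k ℓ : ℕ) (hℓ : 1 ≤ ℓ) (w : ℝ) (hw : w = -(n - 2 * (k : ℝ) - 2 * (ℓ : ℝ)) / 2)
    (f : R) (hf : T f = (-2 * (ℓ : ℝ)) • f) (m : R) (hm : T m = (w - 2) • m) :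
    ∑ s ∈ Finset.range (k + 1),
        (((k.factorial : ℝ) / (((k - s).factorial : ℝ) * (s.factorial : ℝ)))
          * (((ℓ + s - 1).factorial : ℝ) * ((ℓ + (k - s) - 1).factorial : ℝ)
              / ((ℓ - 1).factorial : ℝ) ^ 2))
          • (L ^ (k - s)) (f * (L ^ s) (q * m))
      = q * ∑ s ∈ Finset.range (k + 1),
          (((k.factorial : ℝ) / (((k - s).factorial : ℝ) * (s.factorial : ℝ)))
            * (((ℓ + s - 1).factorial : ℝ) * ((ℓ + (k - s) - 1).factorial : ℝ)
                / ((ℓ - 1).factorial : ℝ) ^ 2))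
            • (L ^ (k - s)) (f * (L ^ s) m) := by
  change ∑ s ∈ Finset.range (k + 1), tangentialCoeff k ℓ s • _
    = q * ∑ s ∈ Finset.range (k + 1), tangentialCoeff k ℓ s • _
  rw [← sub_eq_zero, Finset.mul_sum, ← Finset.sum_sub_distrib]
  simp_rw [mul_smul_comm, ← smul_sub]
  set c := tangentialCoeff k ℓ
  have hsummand : ∀ s ∈ Finset.range (k + 1),
      c s • ((L ^ (k - s)) (f * (L ^ s) (q * m)) - q * (L ^ (k - s)) (f * (L ^ s) m))
        = (c s * (4 * s * ((k : ℝ) + ℓ - s))) • (L ^ (k - s)) (f * (L ^ (s - 1)) m)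
          + -(c s * (4 * ((k : ℝ) - s) * (ℓ + s))) • (L ^ (k - s - 1)) (f * (L ^ s) m) := by
    intro s hs
    rw [pow_apply_mul_pow_apply_mul_sub_mul hT hi hii hw hf hm
      (Nat.lt_succ_iff.mp (Finset.mem_range.mp hs))]
    module
  have hcancel : ∀ s ∈ Finset.range k,
      (c (s + 1) * (4 * (s + 1 : ℕ) * ((k : ℝ) + ℓ - (s + 1 : ℕ))))
          • (L ^ (k - (s + 1))) (f * (L ^ (s + 1 - 1)) m)
        + -(c s * (4 * ((k : ℝ) - s) * (ℓ + s))) • (L ^ (k - s - 1)) (f * (L ^ s) m) = 0 := by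
    intro s hs
    rw [Nat.add_sub_cancel, Nat.sub_sub, neg_smul, ← sub_eq_add_neg, sub_eq_zero]
    congr 1
    push_cast
    linear_combination 4 * tangentialCoeff_succ_mul hℓ (Finset.mem_range.mp hs)
  rw [Finset.sum_congr rfl hsummand, Finset.sum_range_succ_add_shift, Finset.sum_eq_zero hcancel]
  simp
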